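/- There exists a closed 5-prince's tour on the 8×8 chessboard; that is, the graph whose vertices are the cells of the 8×8 board, with two cells (i,j) and (u,v) adjacent if and only if |i-u|+|j-v| = 5, has a Hamiltonian cycle. -/

import Mathlib

/-- The `k`-prince graph on an `m × n` board: cells `(i,j)` and `(u,v)` are adjacent
iff `|i - u| + |j - v| = k`. -/
def princeGraph (m n k : ℕ) : SimpleGraph (Fin m × Fin n) where
  Adj p q := p ≠ q ∧ |(p.1 : ℤ) - (q.1 : ℤ)| + |(p.2 : ℤ) - (q.2 : ℤ)| = k
  symm := ⟨by
    rintro p q ⟨hne, h⟩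
    refine ⟨hne.symm, ?_⟩
    rw [abs_sub_comm ((q.1 : ℤ)), abs_sub_comm ((q.2 : ℤ))]
    exact h⟩
  loopless := ⟨fun p h => h.1 rfl⟩

/-!
The tour is exhibited explicitly. Given as a cyclic list of cells, it is a Hamiltonian cycle as
soon as three finite checks succeed, which the kernel evaluates: cyclically consecutive cells are
a 5-prince move apart, the cells are pairwise distinct, and every cell of the board occurs.
-/

namespace SimpleGraph.Walk

variable {V : Type*} {G : SimpleGraph V}

def closedOfSupport (u : V) (l : List V) (h : (u :: (l ++ [u])).IsChain G.Adj) : G.Walk u u :=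
  (ofSupport _ (List.cons_ne_nil _ _) h).copy (by simp) (by simp)

@[simp]
theorem support_closedOfSupport (u : V) (l : List V) (h : (u :: (l ++ [u])).IsChain G.Adj) :
    (closedOfSupport u l h).support = u :: (l ++ [u]) :=
  (support_copy _ _ _).trans (support_ofSupport _ _)

@[simp]
theorem length_closedOfSupport (u : V) (l : List V) (h : (u :: (l ++ [u])).IsChain G.Adj) :
    (closedOfSupport u l h).length = l.length + 1 :=
  (length_copy _ _ _).trans <| (length_ofSupport _ _).trans <| by simp

theorem isHamiltonianCycle_closedOfSupport [DecidableEq V] {u : V} {l : List V}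
    (h : (u :: (l ++ [u])).IsChain G.Adj) (hnodup : (u :: l).Nodup) (hmem : ∀ v, v ∈ u :: l)
    (hlen : 2 ≤ l.length) : (closedOfSupport u l h).IsHamiltonianCycle := by
  have hnil : ¬(closedOfSupport u l h).Nil := by simp [← length_eq_zero_iff]
  have hperm : (l ++ [u]).Perm (u :: l) := List.perm_append_singleton u l
  have htail : (closedOfSupport u l h).tail.support = l ++ [u] := by
    simp [support_tail_of_not_nil _ hnil]
  have hpath : (closedOfSupport u l h).tail.IsPath :=
    IsPath.mk' (htail ▸ hperm.nodup_iff.mpr hnodup)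
  refine ⟨isCycle_iff_isPath_tail_and_le_length.mpr ⟨hpath, ?_⟩,
    hpath.isHamiltonian_of_mem fun v => htail ▸ hperm.mem_iff.mpr (hmem v)⟩
  rw [length_closedOfSupport]
  omega

end SimpleGraph.Walk

instance (m n k : ℕ) : DecidableRel (princeGraph m n k).Adj := fun _ _ =>
  inferInstanceAs (Decidable (_ ∧ _))

/-- Coordinates are `0`-indexed; the tour starts and ends at the corner `(0, 0)`, which is
therefore not listed. -/
def prince5Tour : List (Fin 8 × Fin 8) :=
  [(0,5), (1,1), (5,0), (7,3), (6,7), (1,7), (0,3), (2,0), (7,0), (3,1), (1,4), (3,7), (7,6),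
   (2,6), (1,2), (5,3), (2,5), (6,4), (2,3), (0,6), (4,7), (7,5), (3,6), (4,2), (0,1), (4,0),
   (3,4), (6,2), (5,6), (5,1), (4,5), (7,7), (7,2), (2,2), (6,1), (4,4), (1,6), (5,5), (2,7),
   (6,6), (4,3), (0,2), (3,0), (7,1), (2,1), (0,4), (3,2), (1,5), (5,4), (6,0), (1,0), (3,3),
   (6,5), (2,4), (7,4), (5,7), (0,7), (1,3), (5,2), (3,5), (6,3), (4,6), (4,1)]

/-- There exists a closed 5-prince's tour on the 8×8 chessboard. -/
theorem prince5_tour_8x8 :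
    ∃ (v : Fin 8 × Fin 8) (p : (princeGraph 8 8 5).Walk v v), p.IsHamiltonianCycle :=
  ⟨(0, 0), _, SimpleGraph.Walk.isHamiltonianCycle_closedOfSupport (l := prince5Tour)
    (by decide +kernel) (by decide +kernel) (by decide +kernel) (by decide)⟩
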